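/- arXiv:2301.07556 — 2 statements merged into one kernel-verified Lean document; each statement's English description precedes it below -/
import Mathlib

section
/- Let X ⊆ ℝⁿ be a strongly E-invex set with respect to Ψ, let h : ℝⁿ → ℝ be semi quasi strongly E-preinvex with respect to Ψ on X, and let β ∈ ℝ be such that β = h u₀ for some u₀ ∈ X and β ≤ h u for all u ∈ X (β is the minimum value of h on X). Then the set of optimal solutions X_opt = {s ∈ X : h s = β} is strongly E-invex with respect to Ψ. -/
open Set

abbrev Rn (n : ℕ) := EuclideanSpace ℝ (Fin n)

/-- A set `S ⊆ ℝⁿ` is strongly E-invex (SEI) with respect to `Ψ`. -/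
def SEISet {n : ℕ} (E : Rn n → Rn n) (Ψ : Rn n × Rn n → Rn n) (S : Set (Rn n)) : Prop :=
  ∀ s ∈ S, ∀ t ∈ S, ∀ α ∈ Icc (0:ℝ) 1, ∀ l ∈ Icc (0:ℝ) 1,
    α • t + E t + l • Ψ (α • s + E s, α • t + E t) ∈ S

/-- Semi strongly E-preinvex (SSEP) with respect to `Ψ` on `S`. -/
def SSEP {n : ℕ} (E : Rn n → Rn n) (Ψ : Rn n × Rn n → Rn n) (S : Set (Rn n))
    (h : Rn n → ℝ) : Prop :=
  ∀ s ∈ S, ∀ t ∈ S, ∀ α ∈ Icc (0:ℝ) 1, ∀ l ∈ Icc (0:ℝ) 1,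
    h (α • t + E t + l • Ψ (α • s + E s, α • t + E t)) ≤ l * h s + (1 - l) * h t

/-- Strictly semi strongly E-preinvex (SSSEP) with respect to `Ψ` on `S`. -/
def SSSEP {n : ℕ} (E : Rn n → Rn n) (Ψ : Rn n × Rn n → Rn n) (S : Set (Rn n))
    (h : Rn n → ℝ) : Prop :=
  ∀ s ∈ S, ∀ t ∈ S, ∀ α ∈ Icc (0:ℝ) 1, ∀ l ∈ Ioo (0:ℝ) 1,
    α • s + E s ≠ α • t + E t →
    h (α • t + E t + l • Ψ (α • s + E s, α • t + E t)) < l * h s + (1 - l) * h t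

/-- Semi quasi strongly E-preinvex (SQSEP) with respect to `Ψ` on `S`. -/
def SQSEP {n : ℕ} (E : Rn n → Rn n) (Ψ : Rn n × Rn n → Rn n) (S : Set (Rn n))
    (h : Rn n → ℝ) : Prop :=
  ∀ s ∈ S, ∀ t ∈ S, ∀ α ∈ Icc (0:ℝ) 1, ∀ l ∈ Icc (0:ℝ) 1,
    h (α • t + E t + l • Ψ (α • s + E s, α • t + E t)) ≤ max (h s) (h t)

/-- Strongly E-preinvex (SEP) with respect to `Ψ` on `S`. -/
def SEP {n : ℕ} (E : Rn n → Rn n) (Ψ : Rn n × Rn n → Rn n) (S : Set (Rn n))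
    (h : Rn n → ℝ) : Prop :=
  ∀ s ∈ S, ∀ t ∈ S, ∀ α ∈ Icc (0:ℝ) 1, ∀ l ∈ Icc (0:ℝ) 1,
    h (α • t + E t + l • Ψ (α • s + E s, α • t + E t)) ≤ l * h (E s) + (1 - l) * h (E t)

/-- Quasi strongly E-preinvex (QSEP) with respect to `Ψ` on `S`. -/
def QSEP {n : ℕ} (E : Rn n → Rn n) (Ψ : Rn n × Rn n → Rn n) (S : Set (Rn n))
    (h : Rn n → ℝ) : Prop :=
  ∀ s ∈ S, ∀ t ∈ S, ∀ α ∈ Icc (0:ℝ) 1, ∀ l ∈ Icc (0:ℝ) 1,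
    h (α • t + E t + l • Ψ (α • s + E s, α • t + E t)) ≤ max (h (E s)) (h (E t))

/-- Semi pseudo strongly E-preinvex (SPSEP) with respect to `Ψ` on `S`. -/
def SPSEP {n : ℕ} (E : Rn n → Rn n) (Ψ : Rn n × Rn n → Rn n) (S : Set (Rn n))
    (h : Rn n → ℝ) : Prop :=
  ∃ b : Rn n × Rn n → ℝ, (∀ s t, 0 < b (s, t)) ∧
    ∀ s ∈ S, ∀ t ∈ S, h s < h t → ∀ α ∈ Icc (0:ℝ) 1, ∀ l ∈ Icc (0:ℝ) 1,
      h (α • t + E t + l • Ψ (α • s + E s, α • t + E t)) ≤ h t + l * (l - 1) * b (s, t)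

/-- A set `G ⊆ ℝⁿ × ℝ` is strongly G-invex with respect to `E` and `Ψ`. -/
def StronglyGInvex {n : ℕ} (E : Rn n → Rn n) (Ψ : Rn n × Rn n → Rn n)
    (G : Set (Rn n × ℝ)) : Prop :=
  ∀ p ∈ G, ∀ q ∈ G, ∀ α ∈ Icc (0:ℝ) 1, ∀ l ∈ Icc (0:ℝ) 1,
    (α • q.1 + E q.1 + l • Ψ (α • p.1 + E p.1, α • q.1 + E q.1),
      l * p.2 + (1 - l) * q.2) ∈ G

theorem SQSEP.seiSet_sublevel {n : ℕ} {E : Rn n → Rn n} {Ψ : Rn n × Rn n → Rn n}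
    {X : Set (Rn n)} {h : Rn n → ℝ} (hX : SEISet E Ψ X) (hh : SQSEP E Ψ X h) (c : ℝ) :
    SEISet E Ψ {s ∈ X | h s ≤ c} := by
  rintro s ⟨hsX, hs⟩ t ⟨htX, ht⟩ α hα l hl
  exact ⟨hX s hsX t htX α hα l hl, (hh s hsX t htX α hα l hl).trans (max_le hs ht)⟩

theorem stmt18_general {n : ℕ} (E : Rn n → Rn n) (Ψ : Rn n × Rn n → Rn n) (X : Set (Rn n))
    (hX : SEISet E Ψ X) (h : Rn n → ℝ) (hh : SQSEP E Ψ X h)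
    (β : ℝ) (hβmin : ∀ u ∈ X, β ≤ h u) :
    SEISet E Ψ {s ∈ X | h s = β} := by
  have hmin_eq_sublevel : {s ∈ X | h s = β} = {s ∈ X | h s ≤ β} := by
    ext s
    exact and_congr_right fun hs => ⟨le_of_eq, fun hle => le_antisymm hle (hβmin s hs)⟩
  rw [hmin_eq_sublevel]
  exact hh.seiSet_sublevel hX β

theorem stmt18 {n : ℕ} (E : Rn n → Rn n) (Ψ : Rn n × Rn n → Rn n) (X : Set (Rn n))
    (hX : SEISet E Ψ X) (h : Rn n → ℝ) (hh : SQSEP E Ψ X h)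
    (β : ℝ) (hβ : ∃ u₀ ∈ X, h u₀ = β) (hβmin : ∀ u ∈ X, β ≤ h u) :
    SEISet E Ψ {s ∈ X | h s = β} :=
  stmt18_general E Ψ X hX h hh β hβmin
end

section
/- Suppose ℝⁿ itself is a strongly E-invex set with respect to Ψ. Let h : ℝⁿ → ℝ be strictly semi strongly E-preinvex with respect to Ψ on ℝⁿ, let h₁, …, h_k : ℝⁿ → ℝ be semi strongly E-preinvex with respect to Ψ on ℝⁿ, and let X = {u ∈ ℝⁿ : h_j u ≤ 0 for all 1 ≤ j ≤ k} be nonempty. Let s ∈ X be a fixed point of E (E s = s) that is a local minimum point of h on X, i.e. there exists ε > 0 such that h s ≤ h t for all t ∈ X with ‖t − s‖ < ε. Then s is a strict global minimum point of h on X: h s < h u for every u ∈ X with u ≠ s. -/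
open Set

/-!
Suppose `h u ≤ h s` for some `u ≠ s` in `X`. Take `α ∈ (0, 1)` small with
`α • u + E u ≠ α • s + E s` (at most one `α` violates this), then `λ ∈ (0, 1)` small. The point
`z = α • s + E s + λ • Ψ (α • u + E u, α • s + E s)` lies in `X`, an intersection of sublevel sets
of SSEP functions and hence strongly E-invex, and is close to `s` because `E s = s`. Strict
preinvexity gives `h z < λ * h u + (1 - λ) * h s ≤ h s`, contradicting local minimality at `s`.
-/

open Filter Topology

section RealModule

variable {V : Type*} [AddCommGroup V] [Module ℝ V]

theorem subsingleton_setOf_smul_add_eq {u s : V} (hus : u ≠ s) (a b : V) :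
    {α : ℝ | α • u + a = α • s + b}.Subsingleton := by
  intro α (hα : α • u + a = α • s + b) β (hβ : β • u + a = β • s + b)
  have hsmul : (α - β) • (u - s) = 0 := by
    linear_combination (norm := module) hα - hβ
  rcases smul_eq_zero.1 hsmul with hαβ | hus'
  · exact sub_eq_zero.1 hαβ
  · exact absurd (sub_eq_zero.1 hus') hus

theorem eventually_nhdsGT_smul_add_ne [TopologicalSpace V] {u s : V} (hus : u ≠ s) (a b : V) :
    ∀ᶠ α in 𝓝[>] (0 : ℝ), α • u + a ≠ α • s + b :=
  (subsingleton_setOf_smul_add_eq hus a b).finite.eventually_cofinite_notMem.filter_mono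
    ((nhdsGT_le_nhdsNE 0).trans (nhdsNE_le_cofinite 0))

theorem tendsto_nhdsGT_smul_add [TopologicalSpace V] [ContinuousSMul ℝ V] [ContinuousAdd V]
    (v x : V) : Tendsto (fun l : ℝ => l • v + x) (𝓝[>] 0) (𝓝 x) :=
  ((continuous_id.smul continuous_const).add continuous_const |>.tendsto' 0 x
    (by simp)).mono_left nhdsWithin_le_nhds

end RealModule

variable {n : ℕ} {E : Rn n → Rn n} {Ψ : Rn n × Rn n → Rn n}

theorem SSEP.seiSet_setOf_nonpos {f : Rn n → ℝ} (hf : SSEP E Ψ univ f) :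
    SEISet E Ψ {u | f u ≤ 0} := by
  intro s hs t ht α hα l hl
  have hconv := hf s trivial t trivial α hα l hl
  have hs : f s ≤ 0 := hs
  have ht : f t ≤ 0 := ht
  show f _ ≤ 0
  nlinarith [hl.1, hl.2]

theorem SEISet.iInter {ι : Sort*} {S : ι → Set (Rn n)} (hS : ∀ i, SEISet E Ψ (S i)) :
    SEISet E Ψ (⋂ i, S i) := by
  intro s hs t ht α hα l hl
  simp only [mem_iInter] at hs ht ⊢
  exact fun i => hS i s (hs i) t (ht i) α hα l hl

theorem SSSEP.lt_of_isLocalMinOn {S X : Set (Rn n)} {h : Rn n → ℝ} {s u : Rn n}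
    (hh : SSSEP E Ψ S h) (hXS : X ⊆ S) (hX : SEISet E Ψ X) (hsX : s ∈ X) (hfix : E s = s)
    (hmin : IsLocalMinOn h X s) (huX : u ∈ X) (hus : u ≠ s) : h s < h u := by
  by_contra! hhu
  have hnear : ∀ᶠ y in 𝓝 s, ∀ᶠ z in 𝓝 y, z ∈ X → h s ≤ h z :=
    eventually_eventually_nhds.2 (eventually_nhdsWithin_iff.1 hmin)
  obtain ⟨α, ⟨hα0, hα1⟩, hne, hαnear⟩ : ∃ α ∈ Ioo (0 : ℝ) 1, α • u + E u ≠ α • s + E s ∧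
      ∀ᶠ z in 𝓝 (α • s + E s), z ∈ X → h s ≤ h z := by
    have hlim := tendsto_nhdsGT_smul_add s (E s)
    rw [hfix] at hlim ⊢
    exact (Eventually.and (Ioo_mem_nhdsGT one_pos)
      ((eventually_nhdsGT_smul_add_ne hus (E u) s).and (hlim.eventually hnear))).exists
  set v := Ψ (α • u + E u, α • s + E s)
  obtain ⟨l, hl, hlnear⟩ : ∃ l ∈ Ioo (0 : ℝ) 1,
      α • s + E s + l • v ∈ X → h s ≤ h (α • s + E s + l • v) := by
    have hlim := tendsto_nhdsGT_smul_add v (α • s + E s)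
    simp only [add_comm _ (_ • v)]
    exact (Eventually.and (Ioo_mem_nhdsGT one_pos) (hlim.eventually hαnear)).exists
  have hα : α ∈ Icc (0 : ℝ) 1 := ⟨hα0.le, hα1.le⟩
  have hlt := hh u (hXS huX) s (hXS hsX) α hα l hl hne
  have hle := hlnear (hX u huX s hsX α hα l (Ioo_subset_Icc_self hl))
  nlinarith [hl.1, hl.2]

theorem stmt19_general {n : ℕ} (E : Rn n → Rn n) (Ψ : Rn n × Rn n → Rn n)
    (h : Rn n → ℝ) (hh : SSSEP E Ψ (Set.univ : Set (Rn n)) h)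
    (k : ℕ) (f : Fin k → Rn n → ℝ)
    (hf : ∀ j, SSEP E Ψ (Set.univ : Set (Rn n)) (f j))
    (X : Set (Rn n)) (hXdef : X = {u : Rn n | ∀ j, f j u ≤ 0})
    (s : Rn n) (hsX : s ∈ X) (hfix : E s = s)
    (hloc : ∃ ε > 0, ∀ t ∈ X, ‖t - s‖ < ε → h s ≤ h t) :
    ∀ u ∈ X, u ≠ s → h s < h u := by
  intro u huX hus
  have hX : SEISet E Ψ X := by
    rw [hXdef, ofPred_forall]
    exact SEISet.iInter fun j => (hf j).seiSet_setOf_nonpos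
  have hmin : IsLocalMinOn h X s := by
    obtain ⟨ε, hε, hεmin⟩ := hloc
    filter_upwards [self_mem_nhdsWithin, nhdsWithin_le_nhds (Metric.ball_mem_nhds s hε)]
      with t htX hts
    exact hεmin t htX (by rwa [Metric.mem_ball, dist_eq_norm] at hts)
  exact hh.lt_of_isLocalMinOn (subset_univ X) hX hsX hfix hmin huX hus

theorem stmt19 {n : ℕ} (E : Rn n → Rn n) (Ψ : Rn n × Rn n → Rn n)
    (hRn : SEISet E Ψ (Set.univ : Set (Rn n)))
    (h : Rn n → ℝ) (hh : SSSEP E Ψ (Set.univ : Set (Rn n)) h)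
    (k : ℕ) (f : Fin k → Rn n → ℝ)
    (hf : ∀ j, SSEP E Ψ (Set.univ : Set (Rn n)) (f j))
    (X : Set (Rn n)) (hXdef : X = {u : Rn n | ∀ j, f j u ≤ 0})
    (hXne : X.Nonempty)
    (s : Rn n) (hsX : s ∈ X) (hfix : E s = s)
    (hloc : ∃ ε > 0, ∀ t ∈ X, ‖t - s‖ < ε → h s ≤ h t) :
    ∀ u ∈ X, u ≠ s → h s < h u :=
  stmt19_general E Ψ h hh k f hf X hXdef s hsX hfix hloc
end
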